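/- Let p ≥ 5 be a prime and a, b ∈ 𝔽_p, and let f₄(a,b) = −3a² + 6ab² − 2b⁴ and g₄(a,b) = (2a − b²)(a² + 2ab² − b⁴). Suppose the point P = (a, b(3a − b²)) lies on the curve y² = x³ + f₄(a,b)x + g₄(a,b) and b(3a − b²) ≠ 0. With x₁ = a, y₁ = b(3a − b²), λ = (3x₁² + f₄(a,b))/(2y₁), x₂ = λ² − 2x₁ and y₂ = λ(x₁ − x₂) − y₁, one has y₂ = 0, i.e. 2P is a point of order 2. -/
import Mathlib


theorem stmt18 (p : ℕ) [Fact p.Prime] (hp5 : 5 ≤ p) (a b : ZMod p)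
    (hy : b * (3 * a - b ^ 2) ≠ 0)
    (hP : (b * (3 * a - b ^ 2)) ^ 2
        = a ^ 3 + (-3 * a ^ 2 + 6 * a * b ^ 2 - 2 * b ^ 4) * a
          + (2 * a - b ^ 2) * (a ^ 2 + 2 * a * b ^ 2 - b ^ 4)) :
    let x₁ : ZMod p := a
    let y₁ : ZMod p := b * (3 * a - b ^ 2)
    let l : ZMod p := (3 * x₁ ^ 2 + (-3 * a ^ 2 + 6 * a * b ^ 2 - 2 * b ^ 4)) / (2 * y₁)
    let x₂ : ZMod p := l ^ 2 - 2 * x₁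
    l * (x₁ - x₂) - y₁ = 0 := by
  intro x₁ y₁ l x₂
  have h2 : (2 : ZMod p) ≠ 0 := by
    intro h
    have : p ∣ 2 := (ZMod.natCast_eq_zero_iff 2 p).mp (by exact_mod_cast h)
    have := Nat.le_of_dvd (by norm_num) this
    omega
  have hy1 : (2 : ZMod p) * y₁ ≠ 0 := mul_ne_zero h2 hy
  have hl : l = b := by
    show (3 * x₁ ^ 2 + (-3 * a ^ 2 + 6 * a * b ^ 2 - 2 * b ^ 4)) / (2 * y₁) = b
    rw [div_eq_iff hy1]
    show (3 : ZMod p) * a ^ 2 + (-3 * a ^ 2 + 6 * a * b ^ 2 - 2 * b ^ 4)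
      = b * (2 * (b * (3 * a - b ^ 2)))
    ring
  show l * (x₁ - (l ^ 2 - 2 * x₁)) - y₁ = 0
  rw [hl]
  show b * (a - (b ^ 2 - 2 * a)) - b * (3 * a - b ^ 2) = 0
  ring
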